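/- arXiv:1311.0754 — 3 statements merged into one kernel-verified Lean document; each statement's English description precedes it below -/
import Mathlib

section
/- The integral from 0 to 1 of (1 - e^{-u})/u du minus the integral from 1 to infinity of e^{-u}/u du equals the Euler–Mascheroni constant γ. -/
/-!
Differentiating under the Gamma integral gives `Γ'(1) = ∫₀^∞ e^{-t} log t dt`, and
`Γ'(1) = -γ`.
Integrating by parts on each side of `1`, with the primitives `(1 - e^{-t}) log t` on `(0, 1]`
and `-e^{-t} log t` on `[1, ∞)`, whose boundary terms all vanish, turns this integral into
`-∫₀¹ (1 - e^{-t})/t dt + ∫₁^∞ e^{-t}/t dt`.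
-/

open Real MeasureTheory Set Filter Topology

namespace Real

theorem hasDerivAt_Gamma_eq_integral {s : ℝ} (hs : 0 < s) :
    HasDerivAt Gamma (∫ t in Ioi 0, t ^ (s - 1) * (log t * exp (-t))) s := by
  have hs' : 0 < (s : ℂ).re := by simpa using hs
  have hΓ : Complex.Gamma =ᶠ[𝓝 (s : ℂ)] Complex.GammaIntegral := by
    filter_upwards [(Complex.continuous_re.isOpen_preimage _ isOpen_Ioi).mem_nhds hs']
      with z hz using Complex.Gamma_eq_integral hz
  have hcast : (∫ t : ℝ in Ioi 0, (t : ℂ) ^ ((s : ℂ) - 1) * (log t * exp (-t)))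
      = ((∫ t in Ioi 0, t ^ (s - 1) * (log t * exp (-t)) : ℝ) : ℂ) := by
    rw [← integral_complex_ofReal]
    refine setIntegral_congr_fun measurableSet_Ioi fun t (ht : 0 < t) => ?_
    push_cast [Complex.ofReal_cpow ht.le]
    rfl
  have := ((Complex.hasDerivAt_GammaIntegral hs').congr_of_eventuallyEq hΓ).real_of_complex
  rw [hcast, Complex.ofReal_re] at this
  simpa only [Complex.Gamma_ofReal, Complex.ofReal_re] using this

theorem integral_exp_neg_mul_log : ∫ t in Ioi 0, exp (-t) * log t = -eulerMascheroniConstant := by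
  refine .trans ?_ ((hasDerivAt_Gamma_eq_integral one_pos).unique hasDerivAt_Gamma_one)
  simp only [sub_self, rpow_zero, one_mul, mul_comm]

theorem abs_one_sub_exp_neg_le {t : ℝ} (ht : 0 ≤ t) : |1 - exp (-t)| ≤ t := by
  rw [abs_of_nonneg (sub_nonneg.2 (exp_le_one_iff.2 (neg_nonpos.2 ht)))]
  linarith [one_sub_le_exp_neg t]

theorem intervalIntegrable_one_sub_exp_neg_div {b : ℝ} (hb : 0 ≤ b) :
    IntervalIntegrable (fun t => (1 - exp (-t)) / t) volume 0 b := by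
  rw [intervalIntegrable_iff_integrableOn_Ioc_of_le hb]
  refine Measure.integrableOn_of_bounded (M := 1) measure_Ioc_lt_top.ne
    (by fun_prop : Measurable fun t => (1 - exp (-t)) / t).aestronglyMeasurable ?_
  filter_upwards [ae_restrict_mem measurableSet_Ioc] with t ht
  rw [norm_div, norm_of_nonneg ht.1.le, div_le_one ht.1]
  exact abs_one_sub_exp_neg_le ht.1.le

theorem integrableOn_exp_neg_div_Ioi {a : ℝ} (ha : 0 < a) :
    IntegrableOn (fun t => exp (-t) / t) (Ioi a) := by
  refine ((integrableOn_exp_neg_Ioi a).div_const a).mono'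
    (by fun_prop : Measurable fun t => exp (-t) / t).aestronglyMeasurable ?_
  filter_upwards [ae_restrict_mem measurableSet_Ioi] with t (ht : a < t)
  rw [norm_div, norm_of_nonneg (exp_pos _).le, norm_of_nonneg (ha.trans ht).le]
  exact div_le_div_of_nonneg_left (exp_pos _).le ha ht.le

theorem intervalIntegrable_exp_neg_mul_log (a b : ℝ) :
    IntervalIntegrable (fun t => exp (-t) * log t) volume a b :=
  intervalIntegral.intervalIntegrable_log'.continuousOn_mul (by fun_prop)

theorem integrableOn_exp_neg_mul_log_Ioi_one :
    IntegrableOn (fun t => exp (-t) * log t) (Ioi 1) := by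
  have hΓ : IntegrableOn (fun t => exp (-t) * t) (Ioi 1) := by
    simpa [show (2 : ℝ) - 1 = 1 by norm_num] using
      (GammaIntegral_convergent two_pos).mono_set (Ioi_subset_Ioi zero_le_one)
  refine hΓ.mono' (by fun_prop) ?_
  filter_upwards [ae_restrict_mem measurableSet_Ioi] with t (ht : 1 < t)
  rw [norm_mul, norm_of_nonneg (exp_pos _).le, norm_of_nonneg (log_nonneg ht.le)]
  exact mul_le_mul_of_nonneg_left (log_le_self (by linarith)) (exp_pos _).le

theorem tendsto_exp_neg_mul_log_atTop : Tendsto (fun t => exp (-t) * log t) atTop (𝓝 0) := by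
  refine squeeze_zero' ?_ ?_ (by simpa using tendsto_pow_mul_exp_neg_atTop_nhds_zero 1)
  · filter_upwards [eventually_ge_atTop 1] with t ht
    exact mul_nonneg (exp_pos _).le (log_nonneg ht)
  · filter_upwards [eventually_ge_atTop 1] with t ht
    rw [mul_comm t]
    exact mul_le_mul_of_nonneg_left (log_le_self (by linarith)) (exp_pos _).le

theorem tendsto_one_sub_exp_neg_mul_log_nhdsGT_zero :
    Tendsto (fun t => (1 - exp (-t)) * log t) (𝓝[>] 0) (𝓝 0) := by
  refine squeeze_zero_norm' ?_ (by simpa using (tendsto_log_mul_rpow_nhdsGT_zero one_pos).abs)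
  filter_upwards [self_mem_nhdsWithin] with t (ht : 0 < t)
  rw [norm_mul, norm_eq_abs, norm_eq_abs, abs_of_pos ht, mul_comm |log t|]
  exact mul_le_mul_of_nonneg_right (abs_one_sub_exp_neg_le ht.le) (abs_nonneg _)

theorem integral_exp_neg_mul_log_Ioi_one :
    ∫ t in Ioi 1, exp (-t) * log t = ∫ t in Ioi 1, exp (-t) / t := by
  have hderiv : ∀ t ∈ Ici (1 : ℝ), HasDerivAt (fun t => -(exp (-t) * log t))
      (exp (-t) * log t - exp (-t) / t) t := fun t ht => by
    have := (((hasDerivAt_neg t).exp).mul (hasDerivAt_log (by linarith [mem_Ici.1 ht]))).neg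
    exact this.congr_deriv (by ring)
  have := integral_Ioi_of_hasDerivAt_of_tendsto' hderiv
    (integrableOn_exp_neg_mul_log_Ioi_one.sub (integrableOn_exp_neg_div_Ioi one_pos))
    (by simpa using tendsto_exp_neg_mul_log_atTop.neg)
  rw [integral_sub integrableOn_exp_neg_mul_log_Ioi_one (integrableOn_exp_neg_div_Ioi one_pos)]
    at this
  simpa [sub_eq_zero] using this

theorem integral_exp_neg_mul_log_zero_one :
    ∫ t in (0 : ℝ)..1, exp (-t) * log t = -∫ t in (0 : ℝ)..1, (1 - exp (-t)) / t := by
  have hlog := intervalIntegrable_exp_neg_mul_log 0 1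
  have hcont : ContinuousAt (fun t => (1 - exp (-t)) * log t) 1 := by fun_prop (disch := norm_num)
  have hderiv : ∀ t ∈ Ioo (0 : ℝ) 1, HasDerivAt (fun t => (1 - exp (-t)) * log t)
      (exp (-t) * log t + (1 - exp (-t)) / t) t := fun t ht => by
    have := (((hasDerivAt_neg t).exp).const_sub 1).mul (hasDerivAt_log ht.1.ne')
    exact this.congr_deriv (by ring)
  have := intervalIntegral.integral_eq_sub_of_hasDerivAt_of_tendsto one_pos hderiv
    (hlog.add (intervalIntegrable_one_sub_exp_neg_div zero_le_one))
    tendsto_one_sub_exp_neg_mul_log_nhdsGT_zero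
    (by simpa using hcont.tendsto.mono_left nhdsWithin_le_nhds)
  rw [intervalIntegral.integral_add hlog (intervalIntegrable_one_sub_exp_neg_div zero_le_one)]
    at this
  simpa [add_eq_zero_iff_eq_neg] using this

end Real

theorem stmt_0 :
    (∫ u in (0:ℝ)..1, (1 - Real.exp (-u)) / u) -
      (∫ u in Set.Ioi (1:ℝ), Real.exp (-u) / u) = Real.eulerMascheroniConstant := by
  have hsplit := intervalIntegral.integral_interval_add_Ioi'
    (intervalIntegrable_exp_neg_mul_log 0 1) integrableOn_exp_neg_mul_log_Ioi_one
  rw [integral_exp_neg_mul_log_zero_one, integral_exp_neg_mul_log_Ioi_one,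
    integral_exp_neg_mul_log] at hsplit
  linarith
end

section
/- For any real b' > 0 and x > 1, ∫_{-π}^{π} θ e^{b' e^{iθ} log x} dθ = (2π/i) ∫₀^{b' log x} (e^{-u} - 1)/u du. -/
/-!
Put `c = b' log x` and `F(t) = ∫_{-π}^{π} θ exp(t e^{iθ}) dθ`, so that `F(0) = 0`. Differentiating
under the integral sign and integrating by parts against the primitive `exp(t e^{iθ}) / (i t)` of
`e^{iθ} exp(t e^{iθ})` gives `F'(t) = (2π / i) (e^{-t} - 1) / t`, where the remaining integral
`∫_{-π}^{π} exp(t e^{iθ}) dθ = 2π` is the mean value property of `exp(t ·)` on the unit circle.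
The theorem is then `F(c) - F(0) = ∫_0^c F'`.
-/

open Real Complex MeasureTheory Metric

theorem Differentiable.integral_comp_exp_mul_I {E : Type*} [NormedAddCommGroup E]
    [NormedSpace ℂ E] [CompleteSpace E] {f : ℂ → E} (hf : Differentiable ℂ f) :
    ∫ θ in (-π)..π, f (cexp (θ * I)) = (2 * π) • f 0 := by
  have hmean := (hf.diffContOnCl (s := ball 0 |1|)).circleAverage
  rw [circleAverage_eq_integral_add (-π), intervalIntegral.integral_comp_add_right
    (fun θ => f (circleMap 0 1 θ))] at hmean
  rw [← hmean, smul_inv_smul₀ (by positivity)]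
  simp only [circleMap, zero_add, ofReal_one, one_mul]
  ring_nf

theorem hasDerivAt_integral_mul_cexp_mul {ψ γ : ℝ → ℂ} (hψ : Continuous ψ) (hγ : Continuous γ)
    (a b : ℝ) (z : ℂ) :
    HasDerivAt (fun w : ℂ => ∫ θ in a..b, ψ θ * exp (w * γ θ))
      (∫ θ in a..b, ψ θ * (γ θ * exp (z * γ θ))) z := by
  have hcont (w : ℂ) : Continuous fun θ => ψ θ * exp (w * γ θ) := by fun_prop
  refine (intervalIntegral.hasDerivAt_integral_of_dominated_loc_of_deriv_le
    (F' := fun w θ => ψ θ * (γ θ * exp (w * γ θ)))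
    (bound := fun θ => ‖ψ θ‖ * ‖γ θ‖ * Real.exp ((‖z‖ + 1) * ‖γ θ‖))
    (ball_mem_nhds z one_pos) (.of_forall fun w => (hcont w).aestronglyMeasurable)
    ((hcont z).intervalIntegrable _ _) (by fun_prop : Continuous _).aestronglyMeasurable
    (.of_forall fun θ _ w hw => ?_) ((by fun_prop : Continuous _).intervalIntegrable _ _)
    (.of_forall fun θ _ w _ => ?_)).2
  · have hw' : ‖w‖ ≤ ‖z‖ + 1 := by
      have := norm_le_norm_add_norm_sub' w z
      rw [mem_ball_iff_norm] at hw
      linarith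
    rw [norm_mul, norm_mul, ← mul_assoc]
    gcongr
    calc ‖exp (w * γ θ)‖ ≤ Real.exp ‖w * γ θ‖ := norm_exp_le_exp_norm _
      _ ≤ Real.exp ((‖z‖ + 1) * ‖γ θ‖) := by rw [norm_mul]; gcongr
  · exact (((hasDerivAt_mul_const (γ θ)).cexp).const_mul (ψ θ)).congr_deriv (by ring)

theorem integral_ofReal_mul_exp_mul_I_mul_cexp {c : ℂ} (hc : c ≠ 0) :
    ∫ θ in (-π)..π, (θ : ℂ) * (exp (θ * I) * exp (c * exp (θ * I))) =
      2 * π * (exp (-c) - 1) / (c * I) := by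
  have hu (θ : ℝ) : HasDerivAt (fun θ : ℝ => (θ : ℂ)) 1 θ := (hasDerivAt_id θ).ofReal_comp
  have hv (θ : ℝ) : HasDerivAt (fun θ : ℝ => exp (c * exp (θ * I)) / (c * I))
      (exp (θ * I) * exp (c * exp (θ * I))) θ :=
    ((((hasDerivAt_mul_const I).cexp.comp_ofReal).const_mul c).cexp.div_const (c * I)).congr_deriv
      (by field_simp)
  have hmean : ∫ θ in (-π)..π, exp (c * exp (θ * I)) = 2 * π := by
    simpa using (by fun_prop : Differentiable ℂ fun w => exp (c * w)).integral_comp_exp_mul_I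
  rw [intervalIntegral.integral_mul_deriv_eq_deriv_mul (fun θ _ => hu θ) (fun θ _ => hv θ)
    (continuous_const.intervalIntegrable _ _) ((by fun_prop : Continuous _).intervalIntegrable _ _)]
  simp only [one_mul, intervalIntegral.integral_div, hmean]
  push_cast
  simp only [neg_mul, exp_neg_pi_mul_I, exp_pi_mul_I]
  field_simp
  ring

theorem IntervalIntegrable.ofReal {f : ℝ → ℝ} {μ : Measure ℝ} {a b : ℝ}
    (hf : IntervalIntegrable f μ a b) : IntervalIntegrable (fun x => (f x : ℂ)) μ a b :=
  ⟨hf.1.ofReal, hf.2.ofReal⟩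

theorem intervalIntegrable_exp_neg_sub_one_div (a b : ℝ) :
    IntervalIntegrable (fun u : ℝ => (Real.exp (-u) - 1) / u) volume a b := by
  have hdiff : Differentiable ℝ fun u : ℝ => Real.exp (-u) := by fun_prop
  have hslope : Continuous (dslope (fun u : ℝ => Real.exp (-u)) 0) := by
    refine continuous_iff_continuousAt.2 fun u => ?_
    rcases eq_or_ne u 0 with rfl | hu
    · exact continuousAt_dslope_same.2 (hdiff 0)
    · exact (continuousAt_dslope_of_ne hu).2 (hdiff u).continuousAt
  refine (hslope.intervalIntegrable a b).congr_ae ?_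
  filter_upwards [ae_restrict_of_ae (Measure.ae_ne volume (0 : ℝ))] with u hu
  rw [dslope_of_ne _ hu, slope_def_field, sub_zero, neg_zero, Real.exp_zero]

theorem stmt_3 (b' x : ℝ) (hb' : 0 < b') (hx : 1 < x) :
    (∫ θ in (-Real.pi)..Real.pi,
        (θ : ℂ) * Complex.exp ((b' : ℂ) * Complex.exp (θ * Complex.I) * (Real.log x : ℂ))) =
      (2 * Real.pi / Complex.I) *
        ((∫ u in (0:ℝ)..(b' * Real.log x), (Real.exp (-u) - 1) / u : ℝ) : ℂ) := by
  set c := b' * Real.log x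
  have hc : 0 < c := mul_pos hb' (Real.log_pos hx)
  set F : ℝ → ℂ := fun t => ∫ θ in (-π)..π, (θ : ℂ) * exp (t * exp (θ * I))
  have hF (t : ℝ) :
      HasDerivAt F (∫ θ in (-π)..π, (θ : ℂ) * (exp (θ * I) * exp (t * exp (θ * I)))) t :=
    (hasDerivAt_integral_mul_cexp_mul continuous_ofReal (by fun_prop) _ _ t).comp_ofReal
  have hF' (t : ℝ) (ht : t ≠ 0) :
      HasDerivAt F (2 * π / I * ((Real.exp (-t) - 1) / t : ℝ)) t := by
    refine (hF t).congr_deriv ?_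
    rw [integral_ofReal_mul_exp_mul_I_mul_cexp (ofReal_ne_zero.2 ht)]
    push_cast
    field_simp
  have hF0 : F 0 = 0 := by
    simp only [F, ofReal_zero, zero_mul, Complex.exp_zero, mul_one]
    rw [intervalIntegral.integral_ofReal, integral_id]
    simp
  have hFTC := intervalIntegral.integral_eq_sub_of_hasDerivAt_of_le hc.le
    (fun t _ => (hF t).continuousAt.continuousWithinAt) (fun t ht => hF' t ht.1.ne')
    ((intervalIntegrable_exp_neg_sub_one_div 0 c).ofReal.const_mul _)
  rw [intervalIntegral.integral_const_mul, intervalIntegral.integral_ofReal, hF0, sub_zero] at hFTC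
  rw [hFTC]
  simp only [F, c, ofReal_mul]
  congr 1
  ext θ
  ring_nf
end

section
/- Let b : ℕ → ℂ be supported on primes, let m be an integer and M a complex constant, and suppose Δ₂(u) := ∑_{p ≤ u} b(p)/p - m log log u - M satisfies |Δ₂(u)| ≤ A e^{-c√(log u)} for all u ≥ 2, with constants A > 0 and c > 0. Then for every 0 < c' < c there is a constant M₁ such that for all x ≥ 2, ∑_{p ≤ x} b(p) (log p)/p = m log x + M₁ + O(e^{-c'√(log x)}), where M₁ = -∫₂^∞ Δ₂(u)/u du + M log 2 + m (log 2)(log log 2 - 1). -/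
/-!
Abel summation with weight `log` turns `∑_{p ≤ x} b(p) log p / p` into
`log x · S(x) - ∫₂^x S(t)/t dt`, where `S(x) = ∑_{p ≤ x} b(p)/p`. Writing
`S = m log log + M + Δ₂`, the main terms integrate exactly (`log t (log log t - 1)` is a
primitive of `log log t / t`), and `∫₂^x Δ₂(t)/t dt = ∫₂^∞ - ∫ₓ^∞`. What is left is
`log x · Δ₂(x) + ∫ₓ^∞ Δ₂(u)/u du`; both terms are a polynomial in `√(log x)` times
`e^{-c √(log x)}`, hence `O(e^{-c' √(log x)})` for every `c' < c`.
-/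

open Real Filter MeasureTheory Set Topology
open scoped Nat

theorem sum_primesBelow_log_mul_eq_sub_integral (a : ℕ → ℂ) (x : ℝ) :
    ∑ p ∈ Nat.primesBelow (⌊x⌋₊ + 1), (log p : ℂ) * a p
      = log x * ∑ p ∈ Nat.primesBelow (⌊x⌋₊ + 1), a p
        - ∫ t in Ioc 2 x, (∑ p ∈ Nat.primesBelow (⌊t⌋₊ + 1), a p) / t := by
  have hsum : ∀ (n : ℕ) (g : ℕ → ℂ), ∑ p ∈ Nat.primesBelow (n + 1), g p
      = ∑ k ∈ Finset.Icc 0 n, if k.Prime then g k else 0 := fun n g => by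
    rw [← Nat.primesLE, Nat.primesLE_eq_filter_Icc_zero, Finset.sum_filter]
  have hderiv : ∀ t ∈ Icc (2 : ℝ) x, HasDerivAt (fun u : ℝ => (log u : ℂ)) (t : ℂ)⁻¹ t :=
    fun t ht => by simpa using (hasDerivAt_log (x := t) (by linarith [ht.1])).ofReal_comp
  have hint : IntegrableOn (deriv fun u : ℝ => (log u : ℂ)) (Icc 2 x) := by
    refine ContinuousOn.integrableOn_Icc (ContinuousOn.congr (f := fun t : ℝ => (t : ℂ)⁻¹) ?_
      fun t ht => (hderiv t ht).deriv)
    exact Complex.continuous_ofReal.continuousOn.inv₀ fun t ht =>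
      Complex.ofReal_ne_zero.mpr (by linarith [ht.1])
  have habel := sum_mul_eq_sub_integral_mul₁ (fun k => if k.Prime then a k else 0)
    (by simp [Nat.not_prime_zero]) (by simp [Nat.not_prime_one]) x
    (fun t ht => (hderiv t ht).differentiableAt) hint
  simp only [mul_ite, mul_zero, ← hsum] at habel
  rw [habel]
  congr 1
  refine setIntegral_congr_fun measurableSet_Ioc fun t ht => ?_
  rw [(hderiv t (Ioc_subset_Icc_self ht)).deriv, div_eq_inv_mul]

theorem hasDerivAt_log_mul_log_log_sub_one {t : ℝ} (ht : 1 < t) :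
    HasDerivAt (fun u => log u * (log (log u) - 1)) (log (log t) / t) t := by
  have hlog : HasDerivAt log t⁻¹ t := hasDerivAt_log (by linarith)
  have hloglog := hlog.log (log_pos ht).ne'
  refine (hlog.mul (hloglog.sub_const 1)).congr_deriv ?_
  have : log t ≠ 0 := (log_pos ht).ne'
  field_simp
  ring

theorem continuousOn_log_log_add_div (m M : ℂ) {s : Set ℝ} (hs : ∀ t ∈ s, 1 < t) :
    ContinuousOn (fun t : ℝ => (m * log (log t) + M) / t) s := by
  have h0 : ∀ t ∈ s, t ≠ 0 := fun t ht => by linarith [hs t ht]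
  have h1 : ∀ t ∈ s, log t ≠ 0 := fun t ht => (log_pos (hs t ht)).ne'
  have hr : ContinuousOn (fun t => log (log t)) s := by fun_prop (disch := assumption)
  exact ((continuousOn_const.mul (Complex.continuous_ofReal.comp_continuousOn hr)).add
    continuousOn_const).div Complex.continuous_ofReal.continuousOn
    fun t ht => Complex.ofReal_ne_zero.mpr (h0 t ht)

theorem integral_log_log_add_div {m M : ℂ} {a x : ℝ} (ha : 1 < a) (hax : a ≤ x) :
    ∫ t in a..x, (m * log (log t) + M) / t
      = m * (log x * (log (log x) - 1) - log a * (log (log a) - 1) : ℝ)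
        + M * (log x - log a : ℝ) := by
  have hpos : ∀ t ∈ uIcc a x, 1 < t := fun t ht => by
    rw [uIcc_of_le hax] at ht; exact ha.trans_le ht.1
  have hderiv : ∀ t ∈ uIcc a x, HasDerivAt
      (fun u : ℝ => m * (log u * (log (log u) - 1) : ℝ) + M * (log u : ℝ))
      ((m * log (log t) + M) / t) t := by
    intro t ht
    have h1 := (hasDerivAt_log_mul_log_log_sub_one (hpos t ht)).ofReal_comp.const_mul m
    have h2 := (hasDerivAt_log (x := t) (by linarith [hpos t ht])).ofReal_comp.const_mul M
    refine (h1.add h2).congr_deriv ?_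
    have : (t : ℂ) ≠ 0 := Complex.ofReal_ne_zero.mpr (by linarith [hpos t ht])
    push_cast
    field_simp
  rw [intervalIntegral.integral_eq_sub_of_hasDerivAt hderiv
    (continuousOn_log_log_add_div m M hpos).intervalIntegrable]
  push_cast
  ring

theorem log_mul_sub_integral_div_eq {S Δ : ℝ → ℂ} {m M : ℂ} {a x : ℝ}
    (hΔ : ∀ t, Δ t = S t - m * log (log t) - M) (hint : IntegrableOn (fun t => Δ t / t) (Ioi a))
    (ha : 1 < a) (hax : a ≤ x) :
    log x * S x - (∫ t in a..x, S t / t) - m * log x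
        - (-(∫ t in Ioi a, Δ t / t) + M * log a + m * log a * (log (log a) - 1))
      = log x * Δ x + ∫ t in Ioi x, Δ t / t := by
  have hsplit : ∀ t, S t / t = Δ t / t + (m * log (log t) + M) / t := fun t => by
    rw [hΔ]; ring
  have hΔint : IntervalIntegrable (fun t => Δ t / t) volume a x :=
    (intervalIntegrable_iff_integrableOn_Ioc_of_le hax).mpr (hint.mono_set Ioc_subset_Ioi_self)
  have hmain : IntervalIntegrable (fun t : ℝ => (m * log (log t) + M) / t) volume a x :=
    (continuousOn_log_log_add_div m M fun t ht => by
      rw [uIcc_of_le hax] at ht; exact ha.trans_le ht.1).intervalIntegrable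
  rw [← intervalIntegral.integral_interval_add_Ioi' hΔint (hint.mono_set (Ioi_subset_Ioi hax)),
    intervalIntegral.integral_congr (fun t _ => hsplit t),
    intervalIntegral.integral_add hΔint hmain, integral_log_log_add_div ha hax, hΔ]
  push_cast
  ring

-- With `v = e^{s²}` one has `dv/v = 2s ds`, and `-(2/c)(s + 1/c) e^{-cs}` is a primitive of
-- `2s e^{-cs}`.
theorem hasDerivAt_sqrt_log_add_inv_mul_exp {c u : ℝ} (hc : 0 < c) (hu : 1 < u) :
    HasDerivAt (fun v => -(2 / c) * ((√(log v) + 1 / c) * exp (-c * √(log v))))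
      (exp (-c * √(log u)) / u) u := by
  have hlog : 0 < log u := log_pos hu
  have hsqrt : HasDerivAt (fun v => √(log v)) (1 / (2 * √(log u)) * u⁻¹) u :=
    (hasDerivAt_sqrt hlog.ne').comp u (hasDerivAt_log (by linarith))
  have hexp := (hsqrt.const_mul (-c)).exp
  refine (((hsqrt.add_const (1 / c)).mul hexp).const_mul (-(2 / c))).congr_deriv ?_
  have : √(log u) ≠ 0 := by positivity
  field_simp
  ring

theorem tendsto_sqrt_log_add_inv_mul_exp {c : ℝ} (hc : 0 < c) :
    Tendsto (fun v => -(2 / c) * ((√(log v) + 1 / c) * exp (-c * √(log v)))) atTop (𝓝 0) := by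
  have h := (tendsto_rpow_mul_exp_neg_mul_atTop_nhds_zero 1 c hc).add
    ((tendsto_rpow_mul_exp_neg_mul_atTop_nhds_zero 0 c hc).const_mul (1 / c))
  have h' := (h.const_mul (-(2 / c))).comp (tendsto_sqrt_atTop.comp tendsto_log_atTop)
  simp only [rpow_one, rpow_zero, mul_zero, add_zero] at h'
  exact h'.congr fun v => by simp only [Function.comp]; ring

theorem integrableOn_and_integral_Ioi_exp_neg_mul_sqrt_log_div {c x : ℝ} (hc : 0 < c)
    (hx : 1 < x) :
    IntegrableOn (fun u => exp (-c * √(log u)) / u) (Ioi x) ∧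
      ∫ u in Ioi x, exp (-c * √(log u)) / u
        = 2 / c * ((√(log x) + 1 / c) * exp (-c * √(log x))) := by
  have hderiv : ∀ u ∈ Ici x, HasDerivAt
      (fun v => -(2 / c) * ((√(log v) + 1 / c) * exp (-c * √(log v))))
      (exp (-c * √(log u)) / u) u :=
    fun u hu => hasDerivAt_sqrt_log_add_inv_mul_exp hc (hx.trans_le hu)
  have hpos : ∀ u ∈ Ioi x, 0 ≤ exp (-c * √(log u)) / u :=
    fun u hu => div_nonneg (exp_pos _).le (by linarith [mem_Ioi.mp hu])
  refine ⟨integrableOn_Ioi_deriv_of_nonneg' hderiv hpos (tendsto_sqrt_log_add_inv_mul_exp hc), ?_⟩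
  rw [integral_Ioi_of_hasDerivAt_of_nonneg' hderiv hpos (tendsto_sqrt_log_add_inv_mul_exp hc)]
  ring

theorem ae_restrict_norm_div_le {Δ : ℝ → ℂ} {A c x : ℝ} (hx : 0 < x)
    (hbd : ∀ u, x ≤ u → ‖Δ u‖ ≤ A * exp (-c * √(log u))) :
    ∀ᵐ u ∂volume.restrict (Ioi x), ‖Δ u / u‖ ≤ A * (exp (-c * √(log u)) / u) := by
  refine (ae_restrict_iff' measurableSet_Ioi).mpr (Eventually.of_forall fun u hu => ?_)
  have hu₀ : 0 < u := hx.trans hu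
  rw [norm_div, Complex.norm_of_nonneg hu₀.le, ← mul_div_assoc]
  exact div_le_div_of_nonneg_right (hbd u hu.le) hu₀.le

theorem integrableOn_Ioi_div_of_norm_le {Δ : ℝ → ℂ} {A c x : ℝ} (hc : 0 < c) (hx : 1 < x)
    (hΔ : Measurable Δ) (hbd : ∀ u, x ≤ u → ‖Δ u‖ ≤ A * exp (-c * √(log u))) :
    IntegrableOn (fun u => Δ u / u) (Ioi x) :=
  ((integrableOn_and_integral_Ioi_exp_neg_mul_sqrt_log_div hc hx).1.const_mul A).mono'
    (hΔ.div Complex.measurable_ofReal).aestronglyMeasurable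
    (ae_restrict_norm_div_le (by linarith) hbd)

theorem norm_integral_Ioi_div_le {Δ : ℝ → ℂ} {A c x : ℝ} (hc : 0 < c) (hx : 1 < x)
    (hbd : ∀ u, x ≤ u → ‖Δ u‖ ≤ A * exp (-c * √(log u))) :
    ‖∫ u in Ioi x, Δ u / u‖ ≤ A * (2 / c * ((√(log x) + 1 / c) * exp (-c * √(log x)))) := by
  obtain ⟨hint, heq⟩ := integrableOn_and_integral_Ioi_exp_neg_mul_sqrt_log_div hc hx
  have h := norm_integral_le_of_norm_le (hint.const_mul A)
    (ae_restrict_norm_div_le (by linarith) hbd)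
  rwa [integral_const_mul, heq] at h

theorem pow_mul_exp_neg_mul_le (n : ℕ) {c c' s : ℝ} (hcc : c' < c) (hs : 0 ≤ s) :
    s ^ n * exp (-c * s) ≤ n ! / (c - c') ^ n * exp (-c' * s) := by
  have hε : 0 < c - c' := sub_pos.mpr hcc
  have hpow : s ^ n * exp (-(c - c') * s) ≤ n ! / (c - c') ^ n := by
    have h := pow_div_factorial_le_exp _ (mul_nonneg hε.le hs) n
    rw [div_le_iff₀ (by positivity), mul_pow] at h
    rw [le_div_iff₀ (by positivity)]
    calc s ^ n * exp (-(c - c') * s) * (c - c') ^ n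
        = (c - c') ^ n * s ^ n * exp (-(c - c') * s) := by ring
      _ ≤ exp ((c - c') * s) * n ! * exp (-(c - c') * s) := by gcongr
      _ = n ! := by rw [mul_right_comm, ← exp_add, neg_mul, add_neg_cancel, exp_zero, one_mul]
  calc s ^ n * exp (-c * s) = s ^ n * exp (-(c - c') * s) * exp (-c' * s) := by
        rw [mul_assoc, ← exp_add]; ring_nf
    _ ≤ n ! / (c - c') ^ n * exp (-c' * s) := by gcongr

theorem norm_log_mul_add_integral_Ioi_le {Δ : ℝ → ℂ} {A c c' x : ℝ} (hA : 0 ≤ A) (hc : 0 < c)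
    (hcc : c' < c) (hx : 1 < x) (hbd : ∀ u, x ≤ u → ‖Δ u‖ ≤ A * exp (-c * √(log u))) :
    ‖log x * Δ x + ∫ u in Ioi x, Δ u / u‖
      ≤ A * (2 / (c - c') ^ 2 + 2 / c * (1 / (c - c') + 1 / c)) * exp (-c' * √(log x)) := by
  set s := √(log x)
  have hs : 0 ≤ s := sqrt_nonneg _
  have hlog : log x = s ^ 2 := (sq_sqrt (log_pos hx).le).symm
  have h2 := pow_mul_exp_neg_mul_le 2 hcc hs
  have h1 := pow_mul_exp_neg_mul_le 1 hcc hs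
  have h0 := pow_mul_exp_neg_mul_le 0 hcc hs
  simp only [Nat.factorial_two, Nat.factorial_one, Nat.factorial_zero, Nat.cast_ofNat,
    Nat.cast_one, pow_zero, pow_one, div_one, one_mul] at h0 h1 h2
  have hfirst : ‖(log x : ℂ) * Δ x‖ ≤ A * (s ^ 2 * exp (-c * s)) := by
    rw [norm_mul, Complex.norm_real, norm_of_nonneg (log_pos hx).le, hlog]
    exact (mul_le_mul_of_nonneg_left (hbd x le_rfl) (sq_nonneg s)).trans_eq (by ring)
  calc ‖log x * Δ x + ∫ u in Ioi x, Δ u / u‖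
      ≤ A * (s ^ 2 * exp (-c * s)) + A * (2 / c * ((s + 1 / c) * exp (-c * s))) :=
        (norm_add_le _ _).trans (add_le_add hfirst (norm_integral_Ioi_div_le hc hx hbd))
    _ = A * (s ^ 2 * exp (-c * s) + 2 / c * (s * exp (-c * s) + 1 / c * exp (-c * s))) := by ring
    _ ≤ A * (2 / (c - c') ^ 2 * exp (-c' * s)
          + 2 / c * (1 / (c - c') * exp (-c' * s) + 1 / c * exp (-c' * s))) := by
        gcongr A * (?_ + 2 / c * (?_ + 1 / c * ?_))
    _ = _ := by ring

theorem stmt_8_general (b : ℕ → ℂ)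
    (m : ℤ) (M : ℂ) (A c : ℝ) (hA : 0 < A) (hc : 0 < c)
    (Δ₂ : ℝ → ℂ)
    (hΔ₂def : ∀ u : ℝ, Δ₂ u =
      (∑ p ∈ Nat.primesBelow (⌊u⌋₊ + 1), b p / (p : ℂ)) -
        (m : ℂ) * (Real.log (Real.log u) : ℂ) - M)
    (hΔ₂bd : ∀ u : ℝ, 2 ≤ u → ‖Δ₂ u‖ ≤ A * Real.exp (-c * Real.sqrt (Real.log u))) :
    ∀ c' : ℝ, 0 < c' → c' < c →
      ∃ M₁ : ℂ, M₁ = -(∫ u in Set.Ioi (2:ℝ), Δ₂ u / (u : ℂ)) +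
          M * (Real.log 2 : ℂ) +
          (m : ℂ) * (Real.log 2 : ℂ) * ((Real.log (Real.log 2) : ℂ) - 1) ∧
        ∃ K : ℝ, ∀ x : ℝ, 2 ≤ x →
          ‖(∑ p ∈ Nat.primesBelow (⌊x⌋₊ + 1), b p * (Real.log p : ℂ) / (p : ℂ)) -
              (m : ℂ) * (Real.log x : ℂ) - M₁‖
            ≤ K * Real.exp (-c' * Real.sqrt (Real.log x)) := by
  intro c' _ hcc
  have hmeas : Measurable Δ₂ := by
    have hS : Measurable fun u : ℝ => ∑ p ∈ Nat.primesBelow (⌊u⌋₊ + 1), b p / (p : ℂ) :=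
      (measurable_from_top (f := fun n : ℕ => ∑ p ∈ Nat.primesBelow (n + 1), b p / (p : ℂ))).comp
        Nat.measurable_floor
    rw [funext hΔ₂def]
    fun_prop
  have hint := integrableOn_Ioi_div_of_norm_le hc one_lt_two hmeas hΔ₂bd
  refine ⟨_, rfl, A * (2 / (c - c') ^ 2 + 2 / c * (1 / (c - c') + 1 / c)), fun x hx => ?_⟩
  have hsum : ∑ p ∈ Nat.primesBelow (⌊x⌋₊ + 1), b p * (log p : ℂ) / p
      = ∑ p ∈ Nat.primesBelow (⌊x⌋₊ + 1), (log p : ℂ) * (b p / p) :=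
    Finset.sum_congr rfl fun p _ => by ring
  rw [hsum, sum_primesBelow_log_mul_eq_sub_integral, ← intervalIntegral.integral_of_le hx,
    log_mul_sub_integral_div_eq hΔ₂def hint one_lt_two hx]
  exact norm_log_mul_add_integral_Ioi_le hA.le hc hcc (by linarith)
    fun u hu => hΔ₂bd u (hx.trans hu)

theorem stmt_8 (b : ℕ → ℂ) (hsupp : ∀ n : ℕ, ¬ n.Prime → b n = 0)
    (m : ℤ) (M : ℂ) (A c : ℝ) (hA : 0 < A) (hc : 0 < c)
    (Δ₂ : ℝ → ℂ)
    (hΔ₂def : ∀ u : ℝ, Δ₂ u =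
      (∑ p ∈ Nat.primesBelow (⌊u⌋₊ + 1), b p / (p : ℂ)) -
        (m : ℂ) * (Real.log (Real.log u) : ℂ) - M)
    (hΔ₂bd : ∀ u : ℝ, 2 ≤ u → ‖Δ₂ u‖ ≤ A * Real.exp (-c * Real.sqrt (Real.log u))) :
    ∀ c' : ℝ, 0 < c' → c' < c →
      ∃ M₁ : ℂ, M₁ = -(∫ u in Set.Ioi (2:ℝ), Δ₂ u / (u : ℂ)) +
          M * (Real.log 2 : ℂ) +
          (m : ℂ) * (Real.log 2 : ℂ) * ((Real.log (Real.log 2) : ℂ) - 1) ∧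
        ∃ K : ℝ, ∀ x : ℝ, 2 ≤ x →
          ‖(∑ p ∈ Nat.primesBelow (⌊x⌋₊ + 1), b p * (Real.log p : ℂ) / (p : ℂ)) -
              (m : ℂ) * (Real.log x : ℂ) - M₁‖
            ≤ K * Real.exp (-c' * Real.sqrt (Real.log x)) :=
  stmt_8_general b m M A c hA hc Δ₂ hΔ₂def hΔ₂bd
end
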